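/- arXiv:1308.3639 — 4 statements merged into one kernel-verified Lean document; each statement's English description precedes it below -/
import Mathlib

section
/- Under the assumptions of the previous iteration (F usc, l-ROSL with l < 0, L-Lipschitz, L < -2l), the sequence x_{n+1} := x_n + (1/(2l))(ȳ - Proj(ȳ, F(x_n))) is Cauchy and converges to some x̄ with ȳ ∈ F(x̄), and |x_n - x̄| ≤ -(1/(2l))·((L/|2l|)^n / (1 - L/|2l|))·dist(ȳ, F(x₀)) for n ≥ 1. -/
/-!
With `z = x + (2l)⁻¹ (ȳ - p)` the Newton step from `x`, and `q` the point of `F z` nearest to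
`ȳ`, one has `‖ȳ - q‖² ≤ ⟪ȳ - q, ȳ - b⟫` for all `b ∈ F z`. One-sided Lipschitz continuity,
applied at the mirror image `x'` of `x` in the hyperplane through `z` orthogonal to `ȳ - q`,
gives `y' ∈ F x'` with `⟪ȳ - q, ȳ - y'⟫ ≤ 0`; as `‖x' - z‖ = ‖x - z‖`, Hausdorff-Lipschitz
continuity moves `y'` to some `b ∈ F z` with `‖y' - b‖ ≤ L ‖x - z‖`. Hence
`dist ȳ (F z) ≤ L ‖x - z‖`, and since steps have length `dist ȳ (F x) / |2l|`, successive
steps shrink by the factor `L / |2l| < 1`. The iterates therefore converge geometrically, and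
`dist ȳ (F x̄) ≤ dist ȳ (F xₙ) + L ‖xₙ - x̄‖ → 0` puts `ȳ` in the closed set `F x̄`.
-/

open Metric Filter RealInnerProductSpace

theorem exists_dist_le_hausdorffDist_of_mem {α : Type*} [PseudoMetricSpace α] {s t : Set α}
    {y : α} (hy : y ∈ s) (hs : Bornology.IsBounded s) (ht : IsCompact t) (ht' : t.Nonempty) :
    ∃ b ∈ t, dist y b ≤ hausdorffDist s t := by
  obtain ⟨b, hb, hyb⟩ := ht.exists_infDist_eq_dist ht' y
  exact ⟨b, hb, hyb ▸ infDist_le_hausdorffDist_of_mem hy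
    (hausdorffEDist_ne_top_of_nonempty_of_bounded ⟨y, hy⟩ ht' hs ht.isBounded)⟩

theorem mem_of_tendsto_of_infDist_tendsto_zero {X Y : Type*} [SeminormedAddCommGroup X]
    [MetricSpace Y] {F : X → Set Y} {L : ℝ} (hne : ∀ x, (F x).Nonempty)
    (hcp : ∀ x, IsCompact (F x)) (hlip : ∀ x x', hausdorffDist (F x) (F x') ≤ L * ‖x - x'‖)
    {x : ℕ → X} {xb : X} {y : Y} (hx : Tendsto x atTop (nhds xb))
    (hy : Tendsto (fun n => infDist y (F (x n))) atTop (nhds 0)) : y ∈ F xb := by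
  have hle : ∀ n, infDist y (F xb) ≤ infDist y (F (x n)) + L * ‖x n - xb‖ := fun n =>
    (infDist_le_infDist_add_hausdorffDist (hausdorffEDist_ne_top_of_nonempty_of_bounded
      (hne _) (hne _) (hcp _).isBounded (hcp _).isBounded)).trans (by grw [hlip])
  have hlim : Tendsto (fun n => infDist y (F (x n)) + L * ‖x n - xb‖) atTop (nhds 0) := by
    simpa using hy.add ((tendsto_iff_norm_sub_tendsto_zero.mp hx).const_mul L)
  rw [(hcp xb).isClosed.mem_iff_infDist_zero (hne xb)]
  exact le_antisymm (ge_of_tendsto' hlim hle) infDist_nonneg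

section

variable {E : Type*} [NormedAddCommGroup E] [InnerProductSpace ℝ E]

def RelaxedOneSidedLipschitz (F : E → Set E) (l : ℝ) : Prop :=
  ∀ x x', ∀ y ∈ F x, ∃ y' ∈ F x', ⟪y - y', x - x'⟫ ≤ l * ‖x - x'‖ ^ 2

theorem norm_sub_sq_le_inner_of_infDist {K : Set E} (hK : Convex ℝ K) {y p b : E} (hp : p ∈ K)
    (hyp : dist y p = infDist y K) (hb : b ∈ K) : ‖y - p‖ ^ 2 ≤ ⟪y - p, y - b⟫ := by
  have hobtuse : ⟪y - p, b - p⟫ ≤ 0 := by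
    refine (norm_eq_iInf_iff_real_inner_le_zero hK hp).mp ?_ b hb
    simpa only [← dist_eq_norm, infDist_eq_iInf] using hyp
  have hsplit : y - b = (y - p) - (b - p) := by abel
  rw [hsplit, inner_sub_right, real_inner_self_eq_norm_sq]
  linarith

theorem RelaxedOneSidedLipschitz.exists_inner_nonpos {F : E → Set E} {l : ℝ}
    (hF : RelaxedOneSidedLipschitz F l) (hl : l < 0) {x y : E} (hy : y ∈ F x) (yb v : E) :
    ∃ x', ‖x' - (x + (1 / (2 * l)) • (yb - y))‖ = ‖x - (x + (1 / (2 * l)) • (yb - y))‖ ∧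
      ∃ y' ∈ F x', ⟪v, yb - y'⟫ ≤ 0 := by
  set z := x + (1 / (2 * l)) • (yb - y)
  rcases le_or_gt ⟪v, yb - y⟫ 0 with hvw | hvw
  · exact ⟨x, rfl, y, hy, hvw⟩
  set t := 2 * (⟪v, x - z⟫ / ‖v‖ ^ 2)
  have hxz : x - z = -(1 / (2 * l)) • (yb - y) := by simp [z]
  have hv : v ≠ 0 := by rintro rfl; simp at hvw
  have hinner : ⟪v, x - z⟫ = -(1 / (2 * l)) * ⟪v, yb - y⟫ := by
    rw [hxz, inner_smul_right]
  have ht : 0 < t := by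
    have hκ : 0 < -(1 / (2 * l)) := by rw [neg_pos, one_div_neg]; linarith
    have := mul_pos hκ hvw
    have := norm_pos_iff.mpr hv
    simp only [t, hinner]
    positivity
  have hlt : l * t * ‖v‖ ^ 2 = -⟪v, yb - y⟫ := by
    simp only [t, hinner]
    field_simp [hl.ne]
  -- the mirror image of `x` in the hyperplane through `z` orthogonal to `v`; it moves `x` by
  -- `t • v` with `t > 0`, so one-sided Lipschitz continuity cancels the component along `v`
  refine ⟨z + (ℝ ∙ v)ᗮ.reflection (x - z),
    by rw [add_sub_cancel_left, LinearIsometryEquiv.norm_map], ?_⟩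
  have hmove : x - (z + (ℝ ∙ v)ᗮ.reflection (x - z)) = t • v := by
    rw [Submodule.reflection_orthogonal_apply, Submodule.reflection_singleton_apply,
      RCLike.ofReal_real_eq_id, id, two_nsmul, mul_smul, two_smul]
    abel
  obtain ⟨y', hy', hrosl⟩ := hF x _ y hy
  refine ⟨y', hy', ?_⟩
  rw [hmove, inner_smul_right, norm_smul, mul_pow, Real.norm_of_nonneg ht.le] at hrosl
  have hcancel : ⟪y - y', v⟫ ≤ -⟪v, yb - y⟫ :=
    hlt ▸ le_of_mul_le_mul_left (by linarith) ht
  have hsplit : yb - y' = (yb - y) + (y - y') := by abel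
  rw [hsplit, inner_add_right]
  linarith [real_inner_comm (y - y') v]

theorem RelaxedOneSidedLipschitz.dist_le_of_infDist {F : E → Set E} {l L : ℝ}
    (hF : RelaxedOneSidedLipschitz F l) (hl : l < 0) (hL : 0 ≤ L)
    (hcp : ∀ x, IsCompact (F x)) (hcv : ∀ x, Convex ℝ (F x))
    (hlip : ∀ x x', hausdorffDist (F x) (F x') ≤ L * ‖x - x'‖)
    {yb x p q : E} (hp : p ∈ F x) (hq : q ∈ F (x + (1 / (2 * l)) • (yb - p)))
    (hqd : dist yb q = infDist yb (F (x + (1 / (2 * l)) • (yb - p)))) :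
    dist yb q ≤ L * dist x (x + (1 / (2 * l)) • (yb - p)) := by
  set z := x + (1 / (2 * l)) • (yb - p)
  obtain ⟨x', hx', y', hy', hv⟩ := hF.exists_inner_nonpos hl hp yb (yb - q)
  obtain ⟨b, hb, hy'b⟩ :=
    exists_dist_le_hausdorffDist_of_mem hy' (hcp x').isBounded (hcp z) ⟨q, hq⟩
  have hy'b : dist y' b ≤ L * dist x z := by
    rw [dist_eq_norm x, ← hx']
    exact hy'b.trans (hlip x' z)
  have hsq : dist yb q ^ 2 ≤ dist yb q * (L * dist x z) :=
    calc dist yb q ^ 2 = ‖yb - q‖ ^ 2 := by rw [dist_eq_norm]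
      _ ≤ ⟪yb - q, yb - b⟫ := norm_sub_sq_le_inner_of_infDist (hcv z) hq hqd hb
      _ = ⟪yb - q, yb - y'⟫ + ⟪yb - q, y' - b⟫ := by
        rw [← inner_add_right, sub_add_sub_cancel]
      _ ≤ ‖yb - q‖ * ‖y' - b‖ := by linarith [real_inner_le_norm (yb - q) (y' - b)]
      _ ≤ dist yb q * (L * dist x z) := by
        rw [← dist_eq_norm, ← dist_eq_norm]
        gcongr
  nlinarith [dist_nonneg (x := yb) (y := q), mul_nonneg hL (dist_nonneg (x := x) (y := z))]

section Iteration

variable {F : E → Set E} {l L : ℝ} {yb : E} {x p : ℕ → E}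
  (hp : ∀ n, p n ∈ F (x n) ∧ dist yb (p n) = infDist yb (F (x n)))
  (hx : ∀ n, x (n + 1) = x n + (1 / (2 * l)) • (yb - p n))
include hp hx

theorem dist_iterate_succ_eq (hl : l < 0) (n : ℕ) :
    dist (x n) (x (n + 1)) = -(1 / (2 * l)) * infDist yb (F (x n)) := by
  rw [hx n, dist_self_add_right, norm_smul, ← dist_eq_norm, (hp n).2, Real.norm_eq_abs,
    abs_of_neg (by rw [one_div_neg]; linarith)]

theorem dist_iterate_succ_le (hF : RelaxedOneSidedLipschitz F l) (hl : l < 0) (hL : 0 ≤ L)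
    (hcp : ∀ x, IsCompact (F x)) (hcv : ∀ x, Convex ℝ (F x))
    (hlip : ∀ x x', hausdorffDist (F x) (F x') ≤ L * ‖x - x'‖) (n : ℕ) :
    dist (x (n + 1)) (x (n + 1 + 1)) ≤ L / |2 * l| * dist (x n) (x (n + 1)) := by
  have hres := hF.dist_le_of_infDist hl hL hcp hcv hlip
    (hp n).1 (hx n ▸ (hp (n + 1)).1) (hx n ▸ (hp (n + 1)).2)
  rw [← hx n, (hp (n + 1)).2] at hres
  have hκ : 0 ≤ -(1 / (2 * l)) := by rw [neg_nonneg, one_div_nonpos]; linarith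
  calc dist (x (n + 1)) (x (n + 1 + 1)) = -(1 / (2 * l)) * infDist yb (F (x (n + 1))) :=
        dist_iterate_succ_eq hp hx hl (n + 1)
    _ ≤ -(1 / (2 * l)) * (L * dist (x n) (x (n + 1))) := by gcongr
    _ = L / |2 * l| * dist (x n) (x (n + 1)) := by
      rw [abs_of_neg (by linarith : 2 * l < 0)]
      field_simp

end Iteration

end

theorem stmt_6_general {d : ℕ}
    (F : EuclideanSpace ℝ (Fin d) → Set (EuclideanSpace ℝ (Fin d)))
    (hne : ∀ x, (F x).Nonempty) (hcp : ∀ x, IsCompact (F x)) (hcv : ∀ x, Convex ℝ (F x))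
    (l L : ℝ) (hl : l < 0) (hL0 : 0 < L) (hL : L < -(2 * l))
    (hrosl : ∀ x x', ∀ y ∈ F x, ∃ y' ∈ F x',
      ⟪y - y', x - x'⟫ ≤ l * ‖x - x'‖ ^ 2)
    (hlip : ∀ x x', Metric.hausdorffDist (F x) (F x') ≤ L * ‖x - x'‖)
    (yb : EuclideanSpace ℝ (Fin d))
    (x p : ℕ → EuclideanSpace ℝ (Fin d))
    (hp : ∀ n, p n ∈ F (x n) ∧ dist yb (p n) = Metric.infDist yb (F (x n)))
    (hx : ∀ n, x (n + 1) = x n + (1 / (2 * l)) • (yb - p n)) :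
    CauchySeq x ∧
    ∃ xb : EuclideanSpace ℝ (Fin d), yb ∈ F xb ∧
      Tendsto x atTop (nhds xb) ∧
      ∀ n, 1 ≤ n →
        ‖x n - xb‖ ≤ -(1 / (2 * l)) * ((L / |2 * l|) ^ n / (1 - L / |2 * l|)) *
          Metric.infDist yb (F (x 0)) := by
  have hq1 : L / |2 * l| < 1 := by
    rw [abs_of_neg (by linarith : 2 * l < 0), div_lt_one (by linarith)]
    exact hL
  have hgeom : ∀ n, dist (x n) (x (n + 1)) ≤ dist (x 0) (x 1) * (L / |2 * l|) ^ n := fun n => by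
    rw [mul_comm]
    exact le_geom (u := fun n => dist (x n) (x (n + 1))) (div_nonneg hL0.le (abs_nonneg _)) n
      fun k _ => dist_iterate_succ_le hp hx hrosl hl hL0.le hcp hcv hlip k
  have hcauchy := cauchySeq_of_le_geometric _ _ hq1 hgeom
  obtain ⟨xb, hxb⟩ := cauchySeq_tendsto_of_complete hcauchy
  refine ⟨hcauchy, xb, ?_, hxb, fun n _ => ?_⟩
  · refine mem_of_tendsto_of_infDist_tendsto_zero hne hcp hlip hxb ?_
    have hres : ∀ n, infDist yb (F (x n)) = -(2 * l) * dist (x n) (x (n + 1)) := fun n => by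
      rw [dist_iterate_succ_eq hp hx hl n]; field_simp [hl.ne]
    have hd : Tendsto (fun n => dist (x n) (x (n + 1))) atTop (nhds 0) := by
      simpa using hxb.dist (hxb.comp (tendsto_add_atTop_nat 1))
    simp_rw [hres]
    simpa using hd.const_mul (-(2 * l))
  · rw [← dist_eq_norm, mul_right_comm, ← dist_iterate_succ_eq hp hx hl 0, ← mul_div_assoc]
    exact dist_le_of_le_geometric_of_tendsto _ _ hq1 hgeom hxb n

theorem stmt_6 {d : ℕ}
    (F : EuclideanSpace ℝ (Fin d) → Set (EuclideanSpace ℝ (Fin d)))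
    (hne : ∀ x, (F x).Nonempty) (hcp : ∀ x, IsCompact (F x)) (hcv : ∀ x, Convex ℝ (F x))
    (husc : ∀ x, ∀ ε > 0, ∃ δ > 0, ∀ x', dist x' x < δ →
      ∀ y ∈ F x', Metric.infDist y (F x) < ε)
    (l L : ℝ) (hl : l < 0) (hL0 : 0 < L) (hL : L < -(2 * l))
    (hrosl : ∀ x x', ∀ y ∈ F x, ∃ y' ∈ F x',
      ⟪y - y', x - x'⟫ ≤ l * ‖x - x'‖ ^ 2)
    (hlip : ∀ x x', Metric.hausdorffDist (F x) (F x') ≤ L * ‖x - x'‖)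
    (yb : EuclideanSpace ℝ (Fin d))
    (x p : ℕ → EuclideanSpace ℝ (Fin d))
    (hp : ∀ n, p n ∈ F (x n) ∧ dist yb (p n) = Metric.infDist yb (F (x n)))
    (hx : ∀ n, x (n + 1) = x n + (1 / (2 * l)) • (yb - p n)) :
    CauchySeq x ∧
    ∃ xb : EuclideanSpace ℝ (Fin d), yb ∈ F xb ∧
      Tendsto x atTop (nhds xb) ∧
      ∀ n, 1 ≤ n →
        ‖x n - xb‖ ≤ -(1 / (2 * l)) * ((L / |2 * l|) ^ n / (1 - L / |2 * l|)) *
          Metric.infDist yb (F (x 0)) :=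
  stmt_6_general F hne hcp hcv l L hl hL0 hL hrosl hlip yb x p hp hx
end

section
/- Let l < 0, L ≥ -l, α = √(L² - l²), and Φ the linear map on ℝ² with matrix (1/2)·[[1, -α/l], [α/l, 1]]. Then for every x₀ ≠ 0, the iterates Φⁿ(x₀) converge to 0 if and only if L < -2l. -/
/-!
The map `Φ` is the rotation-scaling matrix `½ [[1, -α/l], [α/l, 1]]`, i.e. `½ (1 + i α/l)` acting on
`ℂ ≅ ℝ²`, so it multiplies every norm by `c = ½ √(1 + α²/l²) = L / (-2l)` (using `α² = L² - l²`).
Hence `‖Φⁿ x₀‖ = cⁿ ‖x₀‖`, which tends to `0` exactly when `c < 1`.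
-/

open Filter Topology

section NormScaling

variable {E : Type*} [SeminormedAddCommGroup E]

theorem norm_iterate_eq_pow_mul {f : E → E} {c : ℝ} (hf : ∀ x, ‖f x‖ = c * ‖x‖) (n : ℕ) (x : E) :
    ‖f^[n] x‖ = c ^ n * ‖x‖ := by
  induction n with
  | zero => simp
  | succ n ih => rw [Function.iterate_succ_apply', hf, ih, pow_succ']; ring

theorem tendsto_iterate_nhds_zero_iff_of_norm_eq_mul {f : E → E} {c : ℝ} (hc : 0 ≤ c)
    (hf : ∀ x, ‖f x‖ = c * ‖x‖) {x₀ : E} (hx₀ : ‖x₀‖ ≠ 0) :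
    Tendsto (fun n ↦ f^[n] x₀) atTop (𝓝 0) ↔ c < 1 := by
  rw [tendsto_zero_iff_norm_tendsto_zero]
  simp only [norm_iterate_eq_pow_mul hf]
  constructor
  · intro h
    simpa [hx₀, abs_of_nonneg hc] using h.div_const ‖x₀‖
  · intro h
    simpa using (tendsto_pow_atTop_nhds_zero_of_lt_one hc h).mul_const ‖x₀‖

end NormScaling

theorem norm_toEuclideanLin_rotationScaling (a b : ℝ) (x : EuclideanSpace ℝ (Fin 2)) :
    ‖Matrix.toEuclideanLin !![a, -b; b, a] x‖ = √(a ^ 2 + b ^ 2) * ‖x‖ := by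
  rw [← sq_eq_sq₀ (norm_nonneg _) (by positivity), mul_pow, Real.sq_sqrt (by positivity),
    EuclideanSpace.real_norm_sq_eq, EuclideanSpace.real_norm_sq_eq, Fin.sum_univ_two,
    Fin.sum_univ_two]
  simp only [Matrix.ofLp_toLpLin, Matrix.toLin'_apply, Matrix.mulVec, dotProduct, Matrix.of_apply,
    Matrix.cons_val', Matrix.cons_val_fin_one, Matrix.cons_val_zero, Fin.sum_univ_two,
    Matrix.cons_val_one]
  ring

theorem stmt_10 (l L : ℝ) (hl : l < 0) (hL : -l ≤ L)
    (α : ℝ) (hα : α = Real.sqrt (L ^ 2 - l ^ 2))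
    (M : Matrix (Fin 2) (Fin 2) ℝ)
    (hM : M = (1 / 2 : ℝ) • !![1, -α / l; α / l, 1])
    (x₀ : EuclideanSpace ℝ (Fin 2)) (hx₀ : x₀ ≠ 0) :
    Tendsto (fun n => (fun x => Matrix.toEuclideanLin M x)^[n] x₀) atTop
      (nhds (0 : EuclideanSpace ℝ (Fin 2))) ↔ L < -(2 * l) := by
  have hscale : √(1 + (α / l) ^ 2) = L / -l := by
    have hα2 : α ^ 2 = L ^ 2 - l ^ 2 := by rw [hα, Real.sq_sqrt (by nlinarith)]
    rw [show 1 + (α / l) ^ 2 = (L / -l) ^ 2 by field_simp [hl.ne]; linarith,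
      Real.sqrt_sq (div_nonneg (by linarith) (by linarith))]
  have hnorm : ∀ x, ‖Matrix.toEuclideanLin M x‖ = 1 / 2 * √(1 + (α / l) ^ 2) * ‖x‖ := by
    intro x
    rw [hM, neg_div, map_smul, LinearMap.smul_apply, norm_smul, norm_toEuclideanLin_rotationScaling,
      one_pow, Real.norm_of_nonneg one_half_pos.le, mul_assoc]
  rw [tendsto_iterate_nhds_zero_iff_of_norm_eq_mul (by positivity) hnorm (norm_ne_zero_iff.mpr hx₀),
    hscale, show 1 / 2 * (L / -l) = L / -(2 * l) by ring, div_lt_one (by linarith)]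
end

section
/- If F : ℝ → (nonempty compact convex subsets of ℝ) is relaxed one-sided Lipschitz with constant l, then the single-valued function x ↦ max F(x) is one-sided Lipschitz with constant l: (max F(x) - max F(x'))·(x - x') ≤ l(x - x')² for all x, x'. -/
/- Both sides are symmetric in `x` and `x'`, so one may assume `x' ≤ x`. Applying the
relaxed one-sided Lipschitz condition to the maximum `y = max F(x)` gives some `y' ∈ F(x')` with
`(y - y') (x - x') ≤ l (x - x')²`, and `y' ≤ max F(x')` together with `x - x' ≥ 0` only decreases
the left-hand side when `y'` is replaced by `max F(x')`. -/

theorem sSup_sub_sSup_mul_le_of_le {S T : Set ℝ} {l a b : ℝ} (hba : b ≤ a)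
    (hS : sSup S ∈ S) (hT : BddAbove T)
    (h : ∀ y ∈ S, ∃ y' ∈ T, (y - y') * (a - b) ≤ l * (a - b) ^ 2) :
    (sSup S - sSup T) * (a - b) ≤ l * (a - b) ^ 2 := by
  obtain ⟨y', hy'T, hy'⟩ := h _ hS
  calc (sSup S - sSup T) * (a - b) ≤ (sSup S - y') * (a - b) := by
        gcongr
        exact le_csSup hT hy'T
    _ ≤ l * (a - b) ^ 2 := hy'

theorem stmt_15_general (l : ℝ)
    (F : ℝ → Set ℝ)
    (hne : ∀ x, (F x).Nonempty) (hcp : ∀ x, IsCompact (F x))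
    (hrosl : ∀ x x', ∀ y ∈ F x, ∃ y' ∈ F x',
      (y - y') * (x - x') ≤ l * (x - x') ^ 2) :
    ∀ x x' : ℝ, (sSup (F x) - sSup (F x')) * (x - x') ≤ l * (x - x') ^ 2 := by
  have hmem : ∀ z, sSup (F z) ∈ F z := fun z => (hcp z).sSup_mem (hne z)
  have hbdd : ∀ z, BddAbove (F z) := fun z => (hcp z).bddAbove
  intro x x'
  rcases le_total x' x with h | h
  · exact sSup_sub_sSup_mul_le_of_le h (hmem x) (hbdd x') (hrosl x x')
  · have := sSup_sub_sSup_mul_le_of_le h (hmem x') (hbdd x) (hrosl x' x)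
    linarith [show (sSup (F x) - sSup (F x')) * (x - x') = (sSup (F x') - sSup (F x)) * (x' - x)
      by ring, show (x - x') ^ 2 = (x' - x) ^ 2 by ring]

theorem stmt_15 (l : ℝ)
    (F : ℝ → Set ℝ)
    (hne : ∀ x, (F x).Nonempty) (hcp : ∀ x, IsCompact (F x)) (hcv : ∀ x, Convex ℝ (F x))
    (hrosl : ∀ x x', ∀ y ∈ F x, ∃ y' ∈ F x',
      (y - y') * (x - x') ≤ l * (x - x') ^ 2) :
    ∀ x x' : ℝ, (sSup (F x) - sSup (F x')) * (x - x') ≤ l * (x - x') ^ 2 :=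
  stmt_15_general l F hne hcp hrosl
end

section
/- Let F : ℝ → (nonempty compact convex subsets of ℝ) be l-ROSL with l < 0 and L-Lipschitz with L < -4l, let x₀, ȳ ∈ ℝ. Then the iteration x_{n+1} = x_n + (1/(2l))(ȳ - Proj(ȳ, F(x_n))) satisfies dist(x_n, S_F(ȳ)) ≤ -(1/(2l))·κ^{n-1}·dist(ȳ, F(x₀)) for n ≥ 1, where κ = max{1/2, |1 + L/(2l)|}. -/
/-!
Each `F x` is a compact interval `[sInf (F x), sSup (F x)]`, and relaxed one-sided Lipschitzness
with `l < 0` forces both endpoints to decrease at rate at least `|l|`. If `ȳ` lies at distance `d`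
above (below) `F xₙ`, the upper (lower) endpoint therefore reaches `ȳ` within distance `d / |l|`
of `xₙ`, and by the intermediate value theorem a solution lies in that interval, whose midpoint is
`xₙ₊₁`. For the residual, the ROSL condition at the projection `pₙ` gives a point of `F xₙ₊₁` at
least halfway from `pₙ` towards `ȳ` (or beyond), while Hausdorff continuity gives a point within
`L |ȳ - pₙ| / (2|l|)` of `pₙ`; the interval between them comes within `κ |ȳ - pₙ|` of `ȳ`.
-/

open Metric Set

def IsRelaxedOneSidedLipschitz (F : ℝ → Set ℝ) (l : ℝ) : Prop :=
  ∀ x x', ∀ y ∈ F x, ∃ y' ∈ F x', (y - y') * (x - x') ≤ l * (x - x') ^ 2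

theorem Set.OrdConnected.isGreatest_of_dist_eq_infDist {K : Set ℝ} (hK : K.OrdConnected)
    {y p : ℝ} (hp : p ∈ K) (hyp : dist y p = infDist y K) (hpy : p < y) : IsGreatest K p := by
  refine ⟨hp, fun k hk => ?_⟩
  by_contra! hpk
  have hm : min k y ∈ K := hK.out hp hk ⟨le_min hpk.le hpy.le, min_le_left _ _⟩
  have hle := infDist_le_dist_of_mem hm (x := y)
  rw [← hyp, Real.dist_eq, Real.dist_eq, abs_of_pos (sub_pos.2 hpy),
    abs_of_nonneg (sub_nonneg.2 (min_le_right _ _))] at hle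
  linarith [lt_min hpk hpy]

theorem Set.OrdConnected.isLeast_of_dist_eq_infDist {K : Set ℝ} (hK : K.OrdConnected)
    {y p : ℝ} (hp : p ∈ K) (hyp : dist y p = infDist y K) (hyp' : y < p) : IsLeast K p := by
  refine ⟨hp, fun k hk => ?_⟩
  by_contra! hkp
  have hm : max k y ∈ K := hK.out hk hp ⟨le_max_left _ _, max_le hkp.le hyp'.le⟩
  have hle := infDist_le_dist_of_mem hm (x := y)
  rw [← hyp, Real.dist_eq, Real.dist_eq, abs_of_neg (sub_neg.2 hyp'),
    abs_of_nonpos (sub_nonpos.2 (le_max_right _ _))] at hle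
  linarith [max_lt hkp hyp']

theorem Set.OrdConnected.infDist_le {K : Set ℝ} (hK : K.OrdConnected) {u v y r : ℝ}
    (hu : u ∈ K) (hv : v ∈ K) (hyu : y - r ≤ u) (hvy : v ≤ y + r) (hr : 0 ≤ r) :
    infDist y K ≤ r := by
  by_cases huy : u ≤ y + r
  · refine (infDist_le_dist_of_mem hu).trans ?_
    rw [Real.dist_eq, abs_le]
    constructor <;> linarith
  by_cases hyv : y - r ≤ v
  · refine (infDist_le_dist_of_mem hv).trans ?_
    rw [Real.dist_eq, abs_le]
    constructor <;> linarith
  push Not at huy hyv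
  rw [infDist_zero_of_mem (hK.out hv hu ⟨by linarith, by linarith⟩)]
  exact hr

theorem infDist_midpoint_le {S : Set ℝ} {a b : ℝ} (h : (S ∩ uIcc a b).Nonempty) :
    infDist ((a + b) / 2) S ≤ |b - a| / 2 := by
  obtain ⟨z, hzS, hz⟩ := h
  refine (infDist_le_dist_of_mem hzS).trans ?_
  rw [Real.dist_eq, abs_le]
  rcases mem_uIcc.1 hz with ⟨haz, hzb⟩ | ⟨hbz, hza⟩ <;>
    constructor <;> linarith [le_abs_self (b - a), neg_abs_le (b - a)]

theorem Real.sSup_sub_sSup_le_hausdorffDist {A B : Set ℝ} (hA : A.Nonempty) (hB : B.Nonempty)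
    (hAb : Bornology.IsBounded A) (hBb : Bornology.IsBounded B) :
    sSup A - sSup B ≤ hausdorffDist A B := by
  rw [sub_le_iff_le_add']
  refine csSup_le hA fun a ha => ?_
  have hfin := hausdorffEDist_ne_top_of_nonempty_of_bounded hA hB hAb hBb
  have hdist : a - sSup B ≤ infDist a B := (le_infDist hB).2 fun b hb => by
    linarith [le_csSup hBb.bddAbove hb, le_abs_self (a - b), Real.dist_eq a b]
  linarith [infDist_le_hausdorffDist_of_mem ha hfin]

theorem Real.sInf_sub_sInf_le_hausdorffDist {A B : Set ℝ} (hA : A.Nonempty) (hB : B.Nonempty)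
    (hAb : Bornology.IsBounded A) (hBb : Bornology.IsBounded B) :
    sInf B - sInf A ≤ hausdorffDist A B := by
  suffices sInf B - hausdorffDist A B ≤ sInf A by linarith
  refine le_csInf hA fun a ha => ?_
  have hfin := hausdorffEDist_ne_top_of_nonempty_of_bounded hA hB hAb hBb
  have hdist : sInf B - a ≤ infDist a B := (le_infDist hB).2 fun b hb => by
    linarith [csInf_le hBb.bddBelow hb, neg_abs_le (a - b), Real.dist_eq a b]
  linarith [infDist_le_hausdorffDist_of_mem ha hfin]

theorem Real.dist_sSup_sSup_le_hausdorffDist {A B : Set ℝ} (hA : A.Nonempty) (hB : B.Nonempty)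
    (hAb : Bornology.IsBounded A) (hBb : Bornology.IsBounded B) :
    dist (sSup A) (sSup B) ≤ hausdorffDist A B := by
  rw [Real.dist_eq, abs_sub_le_iff, hausdorffDist_comm]
  exact ⟨by rw [hausdorffDist_comm]; exact sSup_sub_sSup_le_hausdorffDist hA hB hAb hBb,
    sSup_sub_sSup_le_hausdorffDist hB hA hBb hAb⟩

theorem Real.dist_sInf_sInf_le_hausdorffDist {A B : Set ℝ} (hA : A.Nonempty) (hB : B.Nonempty)
    (hAb : Bornology.IsBounded A) (hBb : Bornology.IsBounded B) :
    dist (sInf A) (sInf B) ≤ hausdorffDist A B := by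
  rw [Real.dist_eq, abs_sub_le_iff, hausdorffDist_comm]
  exact ⟨sInf_sub_sInf_le_hausdorffDist hB hA hBb hAb,
    by rw [hausdorffDist_comm]; exact sInf_sub_sInf_le_hausdorffDist hA hB hAb hBb⟩

theorem IsCompact.exists_dist_le_hausdorffDist {A B : Set ℝ} {x : ℝ} (hx : x ∈ A)
    (hAb : Bornology.IsBounded A) (hB : IsCompact B) (hBne : B.Nonempty) :
    ∃ z ∈ B, dist x z ≤ hausdorffDist A B := by
  obtain ⟨z, hz, hxz⟩ := hB.exists_infDist_eq_dist hBne x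
  refine ⟨z, hz, hxz ▸ infDist_le_hausdorffDist_of_mem hx ?_⟩
  exact hausdorffEDist_ne_top_of_nonempty_of_bounded ⟨x, hx⟩ hBne hAb hB.isBounded

theorem continuous_of_dist_le_hausdorffDist {F : ℝ → Set ℝ} {g : ℝ → ℝ} {L : ℝ}
    (hg : ∀ t t', dist (g t) (g t') ≤ hausdorffDist (F t) (F t'))
    (hlip : ∀ t t', hausdorffDist (F t) (F t') ≤ L * |t - t'|) : Continuous g :=
  (LipschitzWith.of_dist_le' fun t t' =>
    ((hg t t').trans (hlip t t')).trans_eq (by rw [Real.dist_eq])).continuous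

theorem inter_uIcc_nonempty_of_continuous_selection {F : ℝ → Set ℝ} {g : ℝ → ℝ}
    (hg : Continuous g) (hgF : ∀ t, g t ∈ F t) {y a b : ℝ} (hy : y ∈ uIcc (g a) (g b)) :
    ({z | y ∈ F z} ∩ uIcc a b).Nonempty := by
  obtain ⟨z, hz, rfl⟩ := intermediate_value_uIcc hg.continuousOn hy
  exact ⟨z, hgF z, hz⟩

namespace IsRelaxedOneSidedLipschitz

variable {F : ℝ → Set ℝ} {l : ℝ}

theorem sSup_le (hF : IsRelaxedOneSidedLipschitz F l) {c t : ℝ} (hct : c < t)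
    (ht : IsCompact (F t)) (hne : (F t).Nonempty) (hc : BddAbove (F c)) :
    sSup (F t) ≤ sSup (F c) + l * (t - c) := by
  obtain ⟨y, hy, hrosl⟩ := hF t c _ (ht.sSup_mem hne)
  have hslope : sSup (F t) - y ≤ l * (t - c) := by nlinarith [sub_pos.2 hct]
  linarith [le_csSup hc hy]

theorem sInf_le (hF : IsRelaxedOneSidedLipschitz F l) {c t : ℝ} (hct : c < t)
    (hc : IsCompact (F c)) (hne : (F c).Nonempty) (ht : BddBelow (F t)) :
    sInf (F t) ≤ sInf (F c) + l * (t - c) := by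
  obtain ⟨y, hy, hrosl⟩ := hF c t _ (hc.sInf_mem hne)
  have hslope : l * (c - t) ≤ sInf (F c) - y := by nlinarith [sub_neg.2 hct]
  linarith [csInf_le ht hy]

theorem exists_sq_le_mul (hF : IsRelaxedOneSidedLipschitz F l) (hl : l < 0) {x₀ y p : ℝ}
    (hp : p ∈ F x₀) :
    ∃ y' ∈ F (x₀ + 1 / (2 * l) * (y - p)), (y - p) ^ 2 / 2 ≤ (y - p) * (y' - p) := by
  obtain ⟨y', hy', hrosl⟩ := hF x₀ (x₀ + 1 / (2 * l) * (y - p)) p hp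
  refine ⟨y', hy', ?_⟩
  have hl₀ : l ≠ 0 := hl.ne
  have hkey : (p - y') * (x₀ - (x₀ + 1 / (2 * l) * (y - p))) * (2 * l) =
      (y - p) * (y' - p) := by field_simp; ring
  have hsq : l * (x₀ - (x₀ + 1 / (2 * l) * (y - p))) ^ 2 * (2 * l) = (y - p) ^ 2 / 2 := by
    field_simp; ring
  have hneg := mul_le_mul_of_nonpos_right hrosl (by linarith : 2 * l ≤ 0)
  linarith

theorem infDist_step_setOf_le (hF : IsRelaxedOneSidedLipschitz F l) (hl : l < 0)
    (hne : ∀ x, (F x).Nonempty) (hcp : ∀ x, IsCompact (F x)) (hcv : ∀ x, Convex ℝ (F x))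
    (hsup : Continuous fun t => sSup (F t)) (hinf : Continuous fun t => sInf (F t))
    {x₀ y p : ℝ} (hp : p ∈ F x₀) (hyp : dist y p = infDist y (F x₀)) :
    infDist (x₀ + 1 / (2 * l) * (y - p)) {z | y ∈ F z} ≤ -(1 / (2 * l)) * infDist y (F x₀) := by
  have hl₀ : l ≠ 0 := hl.ne
  set c := x₀ + (y - p) / l with hc
  have hmid : x₀ + 1 / (2 * l) * (y - p) = (x₀ + c) / 2 := by rw [hc]; field_simp; ring
  have hrad : -(1 / (2 * l)) * infDist y (F x₀) = |c - x₀| / 2 := by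
    rw [← hyp, Real.dist_eq, hc, add_sub_cancel_left, abs_div, abs_of_neg hl]
    field_simp
  rw [hmid, hrad]
  apply infDist_midpoint_le
  rcases lt_trichotomy p y with hpy | rfl | hyp'
  · have hsupx := ((hcv x₀).ordConnected.isGreatest_of_dist_eq_infDist hp hyp hpy).csSup_eq
    have hcx : c < x₀ := by
      rw [hc]; linarith [div_neg_of_pos_of_neg (sub_pos.2 hpy) hl]
    have hdecr := hF.sSup_le hcx (hcp x₀) (hne x₀) (hcp c).bddAbove
    have hlc : l * (x₀ - c) = -(y - p) := by rw [hc]; field_simp; ring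
    refine inter_uIcc_nonempty_of_continuous_selection hsup
      (fun t => (hcp t).sSup_mem (hne t)) (mem_uIcc.2 (Or.inl ⟨?_, ?_⟩)) <;>
      linarith
  · exact ⟨x₀, hp, left_mem_uIcc⟩
  · have hinfx := ((hcv x₀).ordConnected.isLeast_of_dist_eq_infDist hp hyp hyp').csInf_eq
    have hxc : x₀ < c := by
      rw [hc]; linarith [div_pos_of_neg_of_neg (sub_neg.2 hyp') hl]
    have hdecr := hF.sInf_le hxc (hcp x₀) (hne x₀) (hcp c).bddBelow
    have hlc : l * (c - x₀) = y - p := by rw [hc]; field_simp; ring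
    refine inter_uIcc_nonempty_of_continuous_selection hinf
      (fun t => (hcp t).sInf_mem (hne t)) (mem_uIcc.2 (Or.inr ⟨?_, ?_⟩)) <;>
      linarith

theorem infDist_apply_step_le (hF : IsRelaxedOneSidedLipschitz F l) (hl : l < 0) {L : ℝ}
    (hne : ∀ x, (F x).Nonempty) (hcp : ∀ x, IsCompact (F x)) (hcv : ∀ x, Convex ℝ (F x))
    (hlip : ∀ x x', hausdorffDist (F x) (F x') ≤ L * |x - x'|) {x₀ y p : ℝ} (hp : p ∈ F x₀) :
    infDist y (F (x₀ + 1 / (2 * l) * (y - p))) ≤ max (1 / 2) |1 + L / (2 * l)| * |y - p| := by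
  set x₁ := x₀ + 1 / (2 * l) * (y - p) with hx₁
  set κ := max (1 / 2) |1 + L / (2 * l)|
  obtain ⟨y', hy', hy'p⟩ := hF.exists_sq_le_mul hl (y := y) hp
  obtain ⟨z, hz, hzp⟩ := (hcp x₁).exists_dist_le_hausdorffDist hp (hcp x₀).isBounded (hne x₁)
  have hstep : |x₀ - x₁| = -(1 / (2 * l)) * |y - p| := by
    rw [hx₁, sub_add_cancel_left, abs_neg, abs_mul, abs_of_neg (one_div_neg.2 (by linarith))]
  have hzp' : |z - p| ≤ -(L / (2 * l)) * |y - p| := by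
    rw [abs_sub_comm, ← Real.dist_eq]
    refine hzp.trans ((hlip x₀ x₁).trans (le_of_eq ?_))
    rw [hstep]; ring
  have hκ₁ : 1 / 2 ≤ κ := le_max_left _ _
  have hκ₂ : -(1 + L / (2 * l)) ≤ κ := (neg_le_abs _).trans (le_max_right _ _)
  have hr : 0 ≤ κ * |y - p| := by positivity
  rcases lt_trichotomy (y - p) 0 with ha | ha | ha
  · rw [abs_of_neg ha] at hzp' hr ⊢
    have hy'near : y' - p ≤ (y - p) / 2 := by nlinarith
    refine (hcv x₁).ordConnected.infDist_le hz hy' ?_ ?_ hr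
    · nlinarith [(abs_le.1 hzp').1]
    · nlinarith
  · have hzy : z = y := by
      rw [ha, abs_zero, mul_zero] at hzp'
      linarith [abs_nonpos_iff.1 hzp']
    rw [ha, abs_zero, mul_zero]
    exact (infDist_zero_of_mem (hzy ▸ hz)).le
  · rw [abs_of_pos ha] at hzp' hr ⊢
    have hy'near : (y - p) / 2 ≤ y' - p := by nlinarith
    refine (hcv x₁).ordConnected.infDist_le hy' hz ?_ ?_ hr
    · nlinarith
    · nlinarith [(abs_le.1 hzp').2]

end IsRelaxedOneSidedLipschitz

theorem stmt_16_general (l L : ℝ) (hl : l < 0)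
    (F : ℝ → Set ℝ)
    (hne : ∀ x, (F x).Nonempty) (hcp : ∀ x, IsCompact (F x)) (hcv : ∀ x, Convex ℝ (F x))
    (hrosl : ∀ x x', ∀ y ∈ F x, ∃ y' ∈ F x',
      (y - y') * (x - x') ≤ l * (x - x') ^ 2)
    (hlip : ∀ x x', Metric.hausdorffDist (F x) (F x') ≤ L * |x - x'|)
    (yb : ℝ) (x p : ℕ → ℝ)
    (hp : ∀ n, p n ∈ F (x n) ∧ dist yb (p n) = Metric.infDist yb (F (x n)))
    (hx : ∀ n, x (n + 1) = x n + (1 / (2 * l)) * (yb - p n))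
    (κ : ℝ) (hκ : κ = max (1 / 2) |1 + L / (2 * l)|) :
    ∀ n, 1 ≤ n →
      Metric.infDist (x n) {z | yb ∈ F z} ≤
        -(1 / (2 * l)) * κ ^ (n - 1) * Metric.infDist yb (F (x 0)) := by
  have hF : IsRelaxedOneSidedLipschitz F l := hrosl
  have hsup : Continuous fun t => sSup (F t) :=
    continuous_of_dist_le_hausdorffDist (fun t t' => Real.dist_sSup_sSup_le_hausdorffDist
      (hne t) (hne t') (hcp t).isBounded (hcp t').isBounded) hlip
  have hinf : Continuous fun t => sInf (F t) :=
    continuous_of_dist_le_hausdorffDist (fun t t' => Real.dist_sInf_sInf_le_hausdorffDist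
      (hne t) (hne t') (hcp t).isBounded (hcp t').isBounded) hlip
  have hcontract (n : ℕ) : infDist yb (F (x (n + 1))) ≤ κ * infDist yb (F (x n)) := by
    rw [hx n, ← (hp n).2, Real.dist_eq, hκ]
    exact hF.infDist_apply_step_le hl hne hcp hcv hlip (hp n).1
  have hdecay (n : ℕ) : infDist yb (F (x n)) ≤ κ ^ n * infDist yb (F (x 0)) :=
    le_geom (u := fun n => infDist yb (F (x n))) (by rw [hκ]; positivity) n
      fun k _ => hcontract k
  intro n hn
  obtain ⟨m, rfl⟩ := Nat.exists_eq_add_of_le' hn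
  rw [Nat.add_sub_cancel, hx m, mul_assoc]
  refine (hF.infDist_step_setOf_le hl hne hcp hcv hsup hinf (hp m).1 (hp m).2).trans ?_
  have hstep : 0 ≤ -(1 / (2 * l)) := neg_nonneg.2 (one_div_neg.2 (by linarith)).le
  exact mul_le_mul_of_nonneg_left (hdecay m) hstep

theorem stmt_16 (l L : ℝ) (hl : l < 0) (hL0 : 0 ≤ L) (hL : L < -(4 * l))
    (F : ℝ → Set ℝ)
    (hne : ∀ x, (F x).Nonempty) (hcp : ∀ x, IsCompact (F x)) (hcv : ∀ x, Convex ℝ (F x))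
    (hrosl : ∀ x x', ∀ y ∈ F x, ∃ y' ∈ F x',
      (y - y') * (x - x') ≤ l * (x - x') ^ 2)
    (hlip : ∀ x x', Metric.hausdorffDist (F x) (F x') ≤ L * |x - x'|)
    (yb : ℝ) (x p : ℕ → ℝ)
    (hp : ∀ n, p n ∈ F (x n) ∧ dist yb (p n) = Metric.infDist yb (F (x n)))
    (hx : ∀ n, x (n + 1) = x n + (1 / (2 * l)) * (yb - p n))
    (κ : ℝ) (hκ : κ = max (1 / 2) |1 + L / (2 * l)|) :
    ∀ n, 1 ≤ n →
      Metric.infDist (x n) {z | yb ∈ F z} ≤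
        -(1 / (2 * l)) * κ ^ (n - 1) * Metric.infDist yb (F (x 0)) :=
  stmt_16_general l L hl F hne hcp hcv hrosl hlip yb x p hp hx κ hκ
end
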